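/- arXiv:1203.2507 — 3 statements merged into one kernel-verified Lean document; each statement's English description precedes it below -/
import Mathlib

section
/- Let v_1, …, v_M be vectors in a real inner product space, and for weight vectors λ, μ in the simplex (nonnegative entries summing to 1) define v_λ = Σ_j λ_j v_j and V(λ) = Σ_j λ_j ‖v_j − v_λ‖². Then for any θ ∈ [0,1], with λ_θ = (1−θ)μ + θλ, one has V(λ_θ) = θ V(λ) + (1−θ) V(μ) + θ(1−θ) ‖v_μ − v_λ‖². -/
/-!
Expanding the square shows that, for weights summing to one, the weighted variance is the weighted
second moment minus the squared norm of the weighted mean. Along `λ_θ = (1 - θ) μ + θ λ` the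
second moment and the mean are both affine in `θ`, so the identity reduces to the parallelogram-type
identity `‖(1 - θ) a + θ b‖² = (1 - θ) ‖a‖² + θ ‖b‖² - θ (1 - θ) ‖a - b‖²`.
-/

open Finset

section

variable {E : Type*} [NormedAddCommGroup E] [InnerProductSpace ℝ E]

theorem norm_one_sub_smul_add_smul_sq (a b : E) (θ : ℝ) :
    ‖(1 - θ) • a + θ • b‖ ^ 2 =
      (1 - θ) * ‖a‖ ^ 2 + θ * ‖b‖ ^ 2 - θ * (1 - θ) * ‖a - b‖ ^ 2 := by
  rw [norm_add_sq_real, norm_sub_sq_real, norm_smul, norm_smul, inner_smul_left,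
    inner_smul_right, Real.norm_eq_abs, Real.norm_eq_abs, mul_pow, mul_pow, sq_abs, sq_abs]
  simp only [conj_trivial]
  ring

theorem sum_mul_norm_sub_sum_smul_sq {ι : Type*} [Fintype ι] (v : ι → E) (w : ι → ℝ)
    (hw : ∑ j, w j = 1) :
    ∑ j, w j * ‖v j - ∑ k, w k • v k‖ ^ 2 = ∑ j, w j * ‖v j‖ ^ 2 - ‖∑ k, w k • v k‖ ^ 2 := by
  set c := ∑ k, w k • v k
  have hmean : ∑ j, w j * inner ℝ (v j) c = ‖c‖ ^ 2 := by
    simp only [← real_inner_smul_left, ← sum_inner, c, real_inner_self_eq_norm_sq]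
  calc ∑ j, w j * ‖v j - c‖ ^ 2
      = ∑ j, (w j * ‖v j‖ ^ 2 - 2 * (w j * inner ℝ (v j) c) + w j * ‖c‖ ^ 2) := by
        refine sum_congr rfl fun j _ => ?_
        rw [norm_sub_sq_real]
        ring
    _ = ∑ j, w j * ‖v j‖ ^ 2 - ‖c‖ ^ 2 := by
        rw [sum_add_distrib, sum_sub_distrib, ← mul_sum, ← sum_mul, hmean, hw]
        ring

end

theorem stmt_3_general {E : Type*} [NormedAddCommGroup E] [InnerProductSpace ℝ E] {M : ℕ}
    (v : Fin M → E) (lam mu : Fin M → ℝ)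
    (hls : ∑ j, lam j = 1)
    (hms : ∑ j, mu j = 1)
    (θ : ℝ) :
    (∑ j, ((1 - θ) * mu j + θ * lam j) *
        ‖v j - ∑ k, ((1 - θ) * mu k + θ * lam k) • v k‖ ^ 2) =
      θ * (∑ j, lam j * ‖v j - ∑ k, lam k • v k‖ ^ 2)
        + (1 - θ) * (∑ j, mu j * ‖v j - ∑ k, mu k • v k‖ ^ 2)
        + θ * (1 - θ) * ‖(∑ k, mu k • v k) - ∑ k, lam k • v k‖ ^ 2 := by
  have hsum : ∑ j, ((1 - θ) * mu j + θ * lam j) = 1 := by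
    rw [sum_add_distrib, ← mul_sum, ← mul_sum, hms, hls]
    ring
  have hmean : ∑ k, ((1 - θ) * mu k + θ * lam k) • v k =
      (1 - θ) • ∑ k, mu k • v k + θ • ∑ k, lam k • v k := by
    simp only [add_smul, mul_smul, sum_add_distrib, smul_sum]
  have hmoment : ∑ j, ((1 - θ) * mu j + θ * lam j) * ‖v j‖ ^ 2 =
      (1 - θ) * ∑ j, mu j * ‖v j‖ ^ 2 + θ * ∑ j, lam j * ‖v j‖ ^ 2 := by
    simp only [add_mul, mul_assoc, sum_add_distrib, mul_sum]
  rw [sum_mul_norm_sub_sum_smul_sq v _ hsum, sum_mul_norm_sub_sum_smul_sq v _ hls,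
    sum_mul_norm_sub_sum_smul_sq v _ hms, hmean, hmoment, norm_one_sub_smul_add_smul_sq]
  ring

/-- Interpolation identity for the variance functional `V` on the simplex:
`V(λ_θ) = θ V(λ) + (1−θ) V(μ) + θ(1−θ) ‖v_μ − v_λ‖²` with `λ_θ = (1−θ)μ + θλ`. -/
theorem stmt_3 {E : Type*} [NormedAddCommGroup E] [InnerProductSpace ℝ E] {M : ℕ}
    (v : Fin M → E) (lam mu : Fin M → ℝ)
    (hl : ∀ j, 0 ≤ lam j) (hls : ∑ j, lam j = 1)
    (hm : ∀ j, 0 ≤ mu j) (hms : ∑ j, mu j = 1)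
    (θ : ℝ) (hθ : θ ∈ Set.Icc (0 : ℝ) 1) :
    (∑ j, ((1 - θ) * mu j + θ * lam j) *
        ‖v j - ∑ k, ((1 - θ) * mu k + θ * lam k) • v k‖ ^ 2) =
      θ * (∑ j, lam j * ‖v j - ∑ k, lam k • v k‖ ^ 2)
        + (1 - θ) * (∑ j, mu j * ‖v j - ∑ k, mu k • v k‖ ^ 2)
        + θ * (1 - θ) * ‖(∑ k, mu k • v k) - ∑ k, lam k • v k‖ ^ 2 :=
  stmt_3_general v lam mu hls hms θ
end

section
/- Let ξ ∈ ℝⁿ be sub-Gaussian with variance proxy σ², let f_1,…,f_M, g ∈ ℝⁿ, let π, λ̃ be probability vectors in ℝ^M, ρ : [0,1] → ℝ with ρ(t) ≥ t for all t, and β > 0. Define R̃ = 2⟨ξ, f_{λ̃} − g⟩_n − (β/n) Σ_j λ̃_j log(ρ(λ̃_j)/π_j) where f_{λ̃} = Σ_j λ̃_j f_j and ⟨·,·⟩_n is the normalized inner product. Then E[exp((n/β) R̃ − (2σ²n/β²) Σ_j λ̃_j ‖f_j − g‖²_n)] ≤ 1, provided λ̃ is non-random (or the bound holds conditionally pointwise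 in λ̃). -/
/-!
Write `f_λ - g = ∑ⱼ λⱼ (fⱼ - g)` and `t = (2/β)(f_λ - g)`. The exponent is then
`⟨t, ξ⟩ - L - (2σ²/β²) ∑ⱼ λⱼ ‖fⱼ - g‖²` (unnormalized norms), where
`L = ∑ⱼ λⱼ log (ρ(λⱼ)/πⱼ)`. The sub-Gaussian bound turns `𝔼 exp ⟨t, ξ⟩` into
`exp ((2σ²/β²) ‖f_λ - g‖²)`, Jensen gives `‖f_λ - g‖² ≤ ∑ⱼ λⱼ ‖fⱼ - g‖²`, and since `ρ(t) ≥ t`,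
`L` dominates the Kullback–Leibler divergence of `λ` from `π`, which is nonnegative.
-/

open MeasureTheory Real Finset

namespace QAggregation

lemma sub_le_mul_log_div {a b : ℝ} (ha : 0 ≤ a) (hb : 0 < b) : a - b ≤ a * log (a / b) := by
  have h := mul_nonneg hb.le (InformationTheory.klFun_nonneg (div_nonneg ha hb.le))
  rw [InformationTheory.klFun_apply] at h
  field_simp at h
  linarith

lemma mul_log_div_le_mul_log_div {a b r : ℝ} (ha : 0 ≤ a) (hb : 0 < b) (har : a ≤ r) :
    a * log (a / b) ≤ a * log (r / b) := by
  rcases ha.eq_or_lt with rfl | ha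
  · simp
  · gcongr

lemma sum_mul_log_div_nonneg {ι : Type*} {s : Finset ι} {q p r : ι → ℝ}
    (hq : ∀ j ∈ s, 0 ≤ q j) (hp : ∀ j ∈ s, 0 < p j) (hqr : ∀ j ∈ s, q j ≤ r j)
    (hsum : ∑ j ∈ s, p j ≤ ∑ j ∈ s, q j) :
    0 ≤ ∑ j ∈ s, q j * log (r j / p j) :=
  calc 0 ≤ ∑ j ∈ s, (q j - p j) := by rw [sum_sub_distrib]; linarith
    _ ≤ ∑ j ∈ s, q j * log (r j / p j) := sum_le_sum fun j hj =>
        (sub_le_mul_log_div (hq j hj) (hp j hj)).trans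
          (mul_log_div_le_mul_log_div (hq j hj) (hp j hj) (hqr j hj))

lemma sum_sq_sum_mul_le {ι κ : Type*} {s : Finset ι} {t : Finset κ} {w : ι → ℝ} (x : ι → κ → ℝ)
    (hw : ∀ j ∈ s, 0 ≤ w j) (hws : ∑ j ∈ s, w j = 1) :
    ∑ i ∈ t, (∑ j ∈ s, w j * x j i) ^ 2 ≤ ∑ j ∈ s, w j * ∑ i ∈ t, x j i ^ 2 := by
  calc ∑ i ∈ t, (∑ j ∈ s, w j * x j i) ^ 2 ≤ ∑ i ∈ t, ∑ j ∈ s, w j * x j i ^ 2 :=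
        sum_le_sum fun i _ =>
          (even_two.convexOn_pow (𝕜 := ℝ)).map_sum_le hw hws fun _ _ => Set.mem_univ _
    _ = ∑ j ∈ s, w j * ∑ i ∈ t, x j i ^ 2 := by
        rw [sum_comm]; simp only [mul_sum]

lemma integral_exp_const_add_le {Ω : Type*} [MeasurableSpace Ω] {μ : Measure Ω} {X : Ω → ℝ}
    {B : ℝ} (hX : ∫ ω, exp (X ω) ∂μ ≤ exp B) (c : ℝ) :
    ∫ ω, exp (c + X ω) ∂μ ≤ exp (c + B) := by
  simp only [exp_add, integral_const_mul]
  gcongr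

end QAggregation

open QAggregation

theorem stmt_6_general {Ω : Type*} [MeasurableSpace Ω] (μ : Measure Ω)
    (n M : ℕ) (hn : 0 < n) (ξ : Ω → Fin n → ℝ) (σ β : ℝ) (hβ : 0 < β)
    (hsub : ∀ t : Fin n → ℝ,
      ∫ ω, Real.exp (∑ i, t i * ξ ω i) ∂μ ≤ Real.exp (σ ^ 2 * (∑ i, (t i) ^ 2) / 2))
    (f : Fin M → Fin n → ℝ) (g : Fin n → ℝ)
    (p lt : Fin M → ℝ) (hp : ∀ j, 0 < p j) (hps : ∑ j, p j = 1)
    (hlt : ∀ j, 0 ≤ lt j) (hlts : ∑ j, lt j = 1)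
    (ρ : ℝ → ℝ) (hρ : ∀ t ∈ Set.Icc (0 : ℝ) 1, t ≤ ρ t) :
    ∫ ω, Real.exp (((n : ℝ) / β) *
        (2 * ((1 / (n : ℝ)) * ∑ i, ξ ω i * ((∑ j, lt j * f j i) - g i))
          - (β / n) * ∑ j, lt j * Real.log (ρ (lt j) / p j))
      - (2 * σ ^ 2 * n / β ^ 2) *
          ∑ j, lt j * ((1 / (n : ℝ)) * ∑ i, (f j i - g i) ^ 2)) ∂μ ≤ 1 := by
  set L := ∑ j, lt j * log (ρ (lt j) / p j)
  set V := ∑ j, lt j * ∑ i, (f j i - g i) ^ 2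
  set d : Fin n → ℝ := fun i => ∑ j, lt j * (f j i - g i)
  have hd : ∀ i, ∑ j, lt j * f j i - g i = d i := fun i => by
    simp only [d, mul_sub, sum_sub_distrib, ← sum_mul, hlts, one_mul]
  have hL : 0 ≤ L := sum_mul_log_div_nonneg (fun j _ => hlt j) (fun j _ => hp j)
    (fun j _ => hρ _ ⟨hlt j, hlts ▸ single_le_sum (fun k _ => hlt k) (mem_univ j)⟩)
    (hps.trans hlts.symm).le
  have hdV : ∑ i, d i ^ 2 ≤ V := sum_sq_sum_mul_le _ (fun j _ => hlt j) hlts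
  have hV : ∑ j, lt j * ((1 / (n : ℝ)) * ∑ i, (f j i - g i) ^ 2) = 1 / n * V := by
    rw [mul_sum]; exact sum_congr rfl fun j _ => mul_left_comm _ _ _
  have ht : ∀ ω, ∑ i, (2 / β * d i) * ξ ω i = 2 / β * ∑ i, ξ ω i * d i := fun ω => by
    rw [mul_sum]; exact sum_congr rfl fun i _ => by ring
  have hn' : (n : ℝ) ≠ 0 := Nat.cast_ne_zero.mpr hn.ne'
  have hβ' : β ≠ 0 := hβ.ne'
  calc _ = ∫ ω, exp ((-L - 2 * σ ^ 2 / β ^ 2 * V) + ∑ i, (2 / β * d i) * ξ ω i) ∂μ := by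
        congr 1 with ω
        rw [hV, ht]
        simp only [hd]
        congr 1
        field_simp
        ring
    _ ≤ exp ((-L - 2 * σ ^ 2 / β ^ 2 * V) + σ ^ 2 * (∑ i, (2 / β * d i) ^ 2) / 2) :=
        integral_exp_const_add_le (hsub _) _
    _ ≤ 1 := by
        have hquad : σ ^ 2 * (∑ i, (2 / β * d i) ^ 2) / 2 = 2 * σ ^ 2 / β ^ 2 * ∑ i, d i ^ 2 := by
          simp only [mul_pow, ← mul_sum]; ring
        rw [exp_le_one_iff, hquad]
        linarith [mul_le_mul_of_nonneg_left hdV (by positivity : 0 ≤ 2 * σ ^ 2 / β ^ 2)]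

/-- MGF control of the empirical process term in the Q-aggregation analysis. -/
theorem stmt_6 {Ω : Type*} [MeasurableSpace Ω] (μ : Measure Ω) [IsProbabilityMeasure μ]
    (n M : ℕ) (hn : 0 < n) (ξ : Ω → Fin n → ℝ) (σ β : ℝ) (hσ : 0 < σ) (hβ : 0 < β)
    (hsub : ∀ t : Fin n → ℝ,
      ∫ ω, Real.exp (∑ i, t i * ξ ω i) ∂μ ≤ Real.exp (σ ^ 2 * (∑ i, (t i) ^ 2) / 2))
    (f : Fin M → Fin n → ℝ) (g : Fin n → ℝ)
    (p lt : Fin M → ℝ) (hp : ∀ j, 0 < p j) (hps : ∑ j, p j = 1)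
    (hlt : ∀ j, 0 ≤ lt j) (hlts : ∑ j, lt j = 1)
    (ρ : ℝ → ℝ) (hρ : ∀ t ∈ Set.Icc (0 : ℝ) 1, t ≤ ρ t) :
    ∫ ω, Real.exp (((n : ℝ) / β) *
        (2 * ((1 / (n : ℝ)) * ∑ i, ξ ω i * ((∑ j, lt j * f j i) - g i))
          - (β / n) * ∑ j, lt j * Real.log (ρ (lt j) / p j))
      - (2 * σ ^ 2 * n / β ^ 2) *
          ∑ j, lt j * ((1 / (n : ℝ)) * ∑ i, (f j i - g i) ^ 2)) ∂μ ≤ 1 :=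
  stmt_6_general μ n M hn ξ σ β hβ hsub f g p lt hp hps hlt hlts ρ hρ
end

section
/- Let 𝔣₁, 𝔣₂ ∈ ℝⁿ with |𝔣₁|² ≤ n, |𝔣₂|² ≥ n + 2√n, and ⟨𝔣₁, 𝔣₂⟩ = 0 (n ≥ 1). Then for any λ₁ ∈ [0, 1/2], |λ₁𝔣₁ + (1−λ₁)𝔣₂|² − |𝔣₁|² ≥ √n/2 − 2λ₁ n. In particular if furthermore λ₁ ≤ 1/(8√n), then |λ₁𝔣₁ + (1−λ₁)𝔣₂|² − |𝔣₁|² ≥ √n/4. -/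
/-!
Since `f₁ ⊥ f₂`, the squared norm of the aggregate is `λ₁² |f₁|² + (1 - λ₁)² |f₂|²`, so the excess
over `|f₁|²` is `(1 - λ₁)² |f₂|² - (1 - λ₁²) |f₁|²`. Inserting the two norm bounds leaves
`2 (1 - λ₁)² √n + (2 λ₁² - 2 λ₁) n`, and `(1 - λ₁)² ≥ 1/4` on `[0, 1/2]`. When `λ₁ ≤ 1/(8√n)`
the loss `2 λ₁ n` is at most `√n / 4`.
-/

open RealInnerProductSpace

section

variable {E : Type*} [NormedAddCommGroup E] [InnerProductSpace ℝ E]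

theorem norm_smul_add_smul_sq_of_inner_eq_zero {x y : E} (hxy : ⟪x, y⟫ = 0) (a b : ℝ) :
    ‖a • x + b • y‖ ^ 2 = a ^ 2 * ‖x‖ ^ 2 + b ^ 2 * ‖y‖ ^ 2 := by
  have hperp : ⟪a • x, b • y⟫ = 0 := by
    rw [real_inner_smul_left, real_inner_smul_right, hxy, mul_zero, mul_zero]
  rw [← sq_abs a, ← sq_abs b, ← mul_pow, ← mul_pow, ← Real.norm_eq_abs, ← Real.norm_eq_abs,
    ← norm_smul, ← norm_smul, sq, sq, sq,
    norm_add_sq_eq_norm_sq_add_norm_sq_real hperp]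

theorem sub_le_norm_sq_convexComb_sub_norm_sq {x y : E} (hxy : ⟪x, y⟫ = 0) {N s l : ℝ}
    (hs : 0 ≤ s) (hx : ‖x‖ ^ 2 ≤ N) (hy : N + 2 * s ≤ ‖y‖ ^ 2) (hl0 : 0 ≤ l) (hl : l ≤ 1 / 2) :
    s / 2 - 2 * l * N ≤ ‖l • x + (1 - l) • y‖ ^ 2 - ‖x‖ ^ 2 := by
  rw [norm_smul_add_smul_sq_of_inner_eq_zero hxy]
  have hx' : (1 - l ^ 2) * ‖x‖ ^ 2 ≤ (1 - l ^ 2) * N :=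
    mul_le_mul_of_nonneg_left hx (by nlinarith)
  have hy' : (1 - l) ^ 2 * (N + 2 * s) ≤ (1 - l) ^ 2 * ‖y‖ ^ 2 :=
    mul_le_mul_of_nonneg_left hy (sq_nonneg _)
  have hquarter : 1 / 4 * s ≤ (1 - l) ^ 2 * s := mul_le_mul_of_nonneg_right (by nlinarith) hs
  have hN : 0 ≤ N := le_trans (sq_nonneg _) hx
  nlinarith [mul_nonneg (sq_nonneg l) hN]

end

theorem two_mul_mul_sq_le_of_le_one_div {s l : ℝ} (hs : 0 ≤ s) (hl : l ≤ 1 / (8 * s)) :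
    2 * l * s ^ 2 ≤ s / 4 := by
  rcases hs.eq_or_lt with rfl | hs
  · simp
  have h8 : l * (8 * s) ≤ 1 := by rwa [le_div_iff₀ (by positivity)] at hl
  nlinarith

theorem stmt_10_general (n : ℕ) (f1 f2 : EuclideanSpace ℝ (Fin n))
    (h1 : ‖f1‖ ^ 2 ≤ (n : ℝ)) (h2 : (n : ℝ) + 2 * Real.sqrt n ≤ ‖f2‖ ^ 2)
    (horth : (inner ℝ f1 f2 : ℝ) = 0)
    (l1 : ℝ) (hl0 : 0 ≤ l1) (hl : l1 ≤ 1 / 2) :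
    Real.sqrt n / 2 - 2 * l1 * n ≤ ‖l1 • f1 + (1 - l1) • f2‖ ^ 2 - ‖f1‖ ^ 2 ∧
      (l1 ≤ 1 / (8 * Real.sqrt n) →
        Real.sqrt n / 4 ≤ ‖l1 • f1 + (1 - l1) • f2‖ ^ 2 - ‖f1‖ ^ 2) := by
  have hs := Real.sqrt_nonneg (n : ℝ)
  have hmain := sub_le_norm_sq_convexComb_sub_norm_sq horth hs h1 h2 hl0 hl
  refine ⟨hmain, fun hl8 => ?_⟩
  have hloss := two_mul_mul_sq_le_of_le_one_div hs hl8
  rw [Real.sq_sqrt n.cast_nonneg] at hloss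
  linarith

/-- Key deterministic estimate in the proof that exponential weights are
deviation suboptimal. -/
theorem stmt_10 (n : ℕ) (hn : 1 ≤ n) (f1 f2 : EuclideanSpace ℝ (Fin n))
    (h1 : ‖f1‖ ^ 2 ≤ (n : ℝ)) (h2 : (n : ℝ) + 2 * Real.sqrt n ≤ ‖f2‖ ^ 2)
    (horth : (inner ℝ f1 f2 : ℝ) = 0)
    (l1 : ℝ) (hl0 : 0 ≤ l1) (hl : l1 ≤ 1 / 2) :
    Real.sqrt n / 2 - 2 * l1 * n ≤ ‖l1 • f1 + (1 - l1) • f2‖ ^ 2 - ‖f1‖ ^ 2 ∧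
      (l1 ≤ 1 / (8 * Real.sqrt n) →
        Real.sqrt n / 4 ≤ ‖l1 • f1 + (1 - l1) • f2‖ ^ 2 - ‖f1‖ ^ 2) :=
  stmt_10_general n f1 f2 h1 h2 horth l1 hl0 hl
end
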